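/- Let 𝓘𝓟 be an IPTA, 𝓘𝓜 its probabilistic zone graph, 𝓘𝓟′ = Reconstruct(𝓘𝓜) the IPTA reconstructed from 𝓘𝓜, and 𝓘𝓜′ the probabilistic zone graph of 𝓘𝓟′. Then 𝓘𝓜′ is equivalent to 𝓘𝓜 up to renaming of locations. -/

import Mathlib

open scoped Classical

noncomputable section

/-! ### Basic relations -/

/-- Comparison relations `<, ≤, ≥, >` used in guards and zones. -/
inductive TRel : Type
  | lt | le | ge | gt
deriving DecidableEq

/-- Semantics of a comparison relation on reals. -/
def TRel.holds : TRel → ℝ → ℝ → Prop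
  | .lt, a, b => a < b
  | .le, a, b => a ≤ b
  | .ge, a, b => a ≥ b
  | .gt, a, b => a > b

/-! ### Distributions and interval distributions -/

/-- A finitely supported probability distribution over `S`. -/
structure FDist (S : Type*) where
  prob : S → ℝ
  nonneg : ∀ s, 0 ≤ prob s
  finsupp : (Function.support prob).Finite
  total : ∑ᶠ s, prob s = 1

/-- An interval distribution over `S`: each element gets a closed subinterval of `[0,1]`. -/
structure IntervalDist (S : Type*) where
  lo : S → ℝ
  hi : S → ℝ
  lo_nonneg : ∀ s, 0 ≤ lo s
  lo_le_hi : ∀ s, lo s ≤ hi s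
  hi_le_one : ∀ s, hi s ≤ 1

/-- A distribution implements an interval distribution iff each probability lies in
the corresponding interval. -/
def FDist.Matches {S : Type*} (μ : FDist S) (Υ : IntervalDist S) : Prop :=
  ∀ s, Υ.lo s ≤ μ.prob s ∧ μ.prob s ≤ Υ.hi s

/-- Feasible supports of an interval distribution. -/
def FS {S : Type*} (Υ : IntervalDist S) : Set (Set S) :=
  { T | ∃ μ : FDist S, μ.Matches Υ ∧ ∀ s, 0 < μ.prob s ↔ s ∈ T }

/-- Restriction of an interval distribution to a support: probabilities outside
the support are set to `[0,0]`. -/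
def IntervalDist.restrict {S : Type*} (Υ : IntervalDist S) (T : Set S) : IntervalDist S where
  lo := fun s => if s ∈ T then Υ.lo s else 0
  hi := fun s => if s ∈ T then Υ.hi s else 0
  lo_nonneg := by
    intro s; (try dsimp only); split
    · exact Υ.lo_nonneg s
    · exact le_rfl
  lo_le_hi := by
    intro s; (try dsimp only); split
    · exact Υ.lo_le_hi s
    · exact le_rfl
  hi_le_one := by
    intro s; (try dsimp only); split
    · exact Υ.hi_le_one s
    · exact zero_le_one

/-! ### IMDPs and MDPs -/

/-- An interval Markov decision process. -/
structure IMDP (S A : Type*) where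
  init : S
  trans : Set (S × A × IntervalDist S)

/-- A Markov decision process (with exact, finitely supported distributions). -/
structure MDP (S A : Type*) where
  init : S
  trans : Set (S × A × FDist S)

/-- Lifting (coupling) of a relation `R` to a distribution and an interval distribution. -/
def distLift {S' S : Type*} (R : Set (S' × S)) (ι : FDist S') (I : IntervalDist S) : Prop :=
  ∃ δ : FDist (S' × S),
    (∀ s', 0 < ι.prob s' → ∑ᶠ s, δ.prob (s', s) = 1) ∧
    (∀ s, I.lo s ≤ (∑ᶠ s', ι.prob s' * δ.prob (s', s)) ∧
      (∑ᶠ s', ι.prob s' * δ.prob (s', s)) ≤ I.hi s) ∧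
    (∀ s' s, 0 < δ.prob (s', s) → (s', s) ∈ R)

/-- An MDP implements an IMDP. -/
def MDP.Implements {S' S A : Type*} (M : MDP S' A) (IM : IMDP S A) : Prop :=
  ∃ R : Set (S' × S), (M.init, IM.init) ∈ R ∧
    ∀ s' s, (s', s) ∈ R →
      (∀ a ι, (s', a, ι) ∈ M.trans → ∃ I, (s, a, I) ∈ IM.trans ∧ distLift R ι I) ∧
      (∀ a I, (s, a, I) ∈ IM.trans → ∃ ι, (s', a, ι) ∈ M.trans ∧ distLift R ι I)

/-- An IMDP is consistent iff it admits at least one implementing MDP. -/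
def IMDP.Consistent {S A : Type*} (IM : IMDP S A) : Prop :=
  ∃ (S' : Type) (M : MDP S' A), M.Implements IM

/-- Reachable states of an MDP. -/
inductive MDP.Reach {S A : Type*} (M : MDP S A) : S → Prop
  | init : MDP.Reach M M.init
  | step {s a ι s'} : MDP.Reach M s → (s, a, ι) ∈ M.trans → 0 < ι.prob s' → MDP.Reach M s'

/-- Reachable states of an IMDP (an edge is possible if its upper probability is positive). -/
inductive IMDP.Reach {S A : Type*} (M : IMDP S A) : S → Prop
  | init : IMDP.Reach M M.init
  | step {s a I s'} : IMDP.Reach M s → (s, a, I) ∈ M.trans → 0 < I.hi s' → IMDP.Reach M s'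

/-- An MDP has the same structure as an IMDP: up to renaming (injectively on its
reachable part) and removal of unreachable states, its underlying directed graph is a
subgraph of the one of the IMDP. -/
def MDP.SameStructure {S' S A : Type*} (M : MDP S' A) (IM : IMDP S A) : Prop :=
  ∃ φ : S' → S, Set.InjOn φ { s | M.Reach s } ∧ φ M.init = IM.init ∧
    ∀ s₁ s₂ : S', M.Reach s₁ →
      (∃ a ι, (s₁, a, ι) ∈ M.trans ∧ 0 < ι.prob s₂) →
      ∃ a I, (φ s₁, a, I) ∈ IM.trans ∧ 0 < I.hi (φ s₂)

/-! ### Guards -/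

/-- An atomic (parametric) guard constraint `x ⋈ k` or `x ⋈ p`. -/
inductive GuardAtom (X P : Type*) : Type _
  | const (x : X) (r : TRel) (k : ℤ)
  | param (x : X) (r : TRel) (p : P)

/-- A guard is a (finite) conjunction of atomic constraints. -/
abbrev PGuard (X P : Type*) := List (GuardAtom X P)

/-- A valuated guard atom `x ⋈ q` with a rational constant. -/
inductive VGuardAtom (X : Type*) : Type _
  | atom (x : X) (r : TRel) (q : ℚ)

/-- A valuated guard. -/
abbrev VGuard (X : Type*) := List (VGuardAtom X)

/-- Valuating a guard atom with a (nonnegative rational) parameter valuation. -/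
def GuardAtom.val {X P : Type*} (v : P → NNRat) : GuardAtom X P → VGuardAtom X
  | .const x r k => .atom x r (k : ℚ)
  | .param x r p => .atom x r ((v p : ℚ))

/-- Satisfaction of a valuated guard atom by a clock valuation. -/
def VGuardAtom.sat {X : Type*} (w : X → ℝ) : VGuardAtom X → Prop
  | .atom x r q => r.holds (w x) (q : ℝ)

/-- Satisfaction of a valuated guard by a clock valuation. -/
def VGuard.sat {X : Type*} (w : X → ℝ) (g : VGuard X) : Prop :=
  ∀ c ∈ g, c.sat w

/-- A valuated guard is satisfiable iff some (nonnegative) clock valuation satisfies it. -/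
def VGuard.Satisfiable {X : Type*} (g : VGuard X) : Prop :=
  ∃ w : X → ℝ, (∀ x, 0 ≤ w x) ∧ VGuard.sat w g

/-! ### Zones (non-parametric syntactic guards) -/

/-- An atomic zone constraint: `x ⋈ k` or `x - y ⋈ k` with an integer `k`. -/
inductive ZoneAtom (X : Type*) : Type _
  | rect (x : X) (r : TRel) (k : ℤ)
  | diag (x y : X) (r : TRel) (k : ℤ)

/-- A zone: a conjunction of atomic zone constraints. -/
abbrev Zone (X : Type*) := List (ZoneAtom X)

/-- Satisfaction of an atomic zone constraint. -/
def ZoneAtom.sat {X : Type*} (w : X → ℝ) : ZoneAtom X → Prop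
  | .rect x r k => r.holds (w x) (k : ℝ)
  | .diag x y r k => r.holds (w x - w y) (k : ℝ)

/-- Satisfaction of a zone. -/
def Zone.sat {X : Type*} (w : X → ℝ) (g : Zone X) : Prop := ∀ c ∈ g, c.sat w

/-! ### (Interval) probabilistic timed automata, generic in the guard type `G` -/

/-- An interval probabilistic timed automaton with actions `A`, locations `L`, clocks `X`
and guards of type `G`. -/
structure IPTA (A L X G : Type*) where
  init : L
  edges : Set (L × G × A × IntervalDist (Finset X × L))

/-- A probabilistic timed automaton. -/
structure PTA (A L X G : Type*) where
  init : L
  edges : Set (L × G × A × FDist (Finset X × L))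

/-- The coupling-based lifting of a relation on locations to (interval) distributions
over (reset set, location) pairs. -/
def edistLift {L' L X : Type*} (R : Set (L' × L)) (υ : FDist (Finset X × L'))
    (Υ : IntervalDist (Finset X × L)) : Prop :=
  ∃ δ : FDist (L' × L),
    (∀ (ρ : Finset X) (m' : L'), 0 < υ.prob (ρ, m') → ∑ᶠ m : L, δ.prob (m', m) = 1) ∧
    (∀ (ρ : Finset X) (m : L),
      Υ.lo (ρ, m) ≤ (∑ᶠ m' : L', υ.prob (ρ, m') * δ.prob (m', m)) ∧
      (∑ᶠ m' : L', υ.prob (ρ, m') * δ.prob (m', m)) ≤ Υ.hi (ρ, m)) ∧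
    (∀ m' m, 0 < δ.prob (m', m) → (m', m) ∈ R)

/-- A PTA implements an IPTA (same actions, same clocks, same guards). -/
def PTA.Implements {A L' L X G : Type*} (T : PTA A L' X G) (IP : IPTA A L X G) : Prop :=
  ∃ R : Set (L' × L), (T.init, IP.init) ∈ R ∧
    ∀ l' l, (l', l) ∈ R →
      (∀ g a υ, (l', g, a, υ) ∈ T.edges → ∃ Υ, (l, g, a, Υ) ∈ IP.edges ∧ edistLift R υ Υ) ∧
      (∀ g a Υ, (l, g, a, Υ) ∈ IP.edges → ∃ υ, (l', g, a, υ) ∈ T.edges ∧ edistLift R υ Υ)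

/-- An IPTA is consistent iff it admits at least one implementing PTA. -/
def IPTA.Consistent {A L X G : Type*} (IP : IPTA A L X G) : Prop :=
  ∃ (L' : Type) (T : PTA A L' X G), T.Implements IP

/-! ### Parametric interval probabilistic timed automata -/

/-- A parametric interval probabilistic timed automaton. -/
structure PIPTA (A L X P : Type*) where
  init : L
  edges : Set (L × PGuard X P × A × IntervalDist (Finset X × L))

/-- The type of edges of a PIPTA. -/
abbrev EdgeT (A L X P : Type*) := L × PGuard X P × A × IntervalDist (Finset X × L)

/-- Valuation of a PIPTA: parameters are replaced by their (nonnegative rational) values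
and edges with unsatisfiable guards are removed. -/
def PIPTA.val {A L X P : Type*} (M : PIPTA A L X P) (v : P → NNRat) :
    IPTA A L X (VGuard X) where
  init := M.init
  edges := { e | ∃ l g a Υ, (l, g, a, Υ) ∈ M.edges ∧
      e = (l, g.map (GuardAtom.val v), a, Υ) ∧
      VGuard.Satisfiable (g.map (GuardAtom.val v)) }

/-- An atomic guard constraint respects a lower/upper partition of the parameters. -/
def GuardAtom.LURespects {X P : Type*} (isLower : P → Prop) : GuardAtom X P → Prop
  | .const _ _ _ => True
  | .param _ r p => (isLower p → r = .ge ∨ r = .gt) ∧ (¬ isLower p → r = .le ∨ r = .lt)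

/-- A PIPTA is L/U w.r.t. a partition of its parameters into lower-bound and
upper-bound parameters. -/
def PIPTA.IsLU {A L X P : Type*} (M : PIPTA A L X P) (isLower : P → Prop) : Prop :=
  ∀ e ∈ M.edges, ∀ c ∈ e.2.1, GuardAtom.LURespects isLower c

/-! ### Parametric (non-probabilistic) timed automata -/

/-- A parametric timed automaton (without invariants): transitions carry a guard,
an action, a set of clocks to reset, and a target location. -/
structure PPTA (A L X P : Type*) where
  init : L
  trans : Set (L × PGuard X P × A × Finset X × L)

/-- Reachability in the concrete semantics of a valuated parametric timed automaton. -/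
inductive PPTA.Reach {A L X P : Type*} [DecidableEq X] (T : PPTA A L X P) (v : P → NNRat) :
    L → (X → ℝ) → Prop
  | init : PPTA.Reach T v T.init (fun _ => 0)
  | step {l : L} {w : X → ℝ} {d : ℝ} {g : PGuard X P} {a : A} {ρ : Finset X} {l' : L} :
      PPTA.Reach T v l w →
      (l, g, a, ρ, l') ∈ T.trans →
      0 ≤ d →
      VGuard.sat (fun x => w x + d) (g.map (GuardAtom.val v)) →
      PPTA.Reach T v l' (fun x => if x ∈ ρ then 0 else w x + d)

/-- Runs of a valuated parametric timed automaton, represented by their sequence of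
delays and transitions, starting from a given configuration. -/
def PPTA.IsRunFrom {A L X P : Type*} [DecidableEq X] (T : PPTA A L X P) (v : P → NNRat) :
    L → (X → ℝ) → List (ℝ × (L × PGuard X P × A × Finset X × L)) → Prop
  | _, _, [] => True
  | l, w, (d, tr) :: rest =>
      0 ≤ d ∧ tr ∈ T.trans ∧ tr.1 = l ∧
      VGuard.sat (fun x => w x + d) (tr.2.1.map (GuardAtom.val v)) ∧
      PPTA.IsRunFrom T v tr.2.2.2.2 (fun x => if x ∈ tr.2.2.2.1 then 0 else w x + d) rest

/-- A run of a valuated parametric timed automaton (from the initial configuration). -/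
def PPTA.IsRun {A L X P : Type*} [DecidableEq X] (T : PPTA A L X P) (v : P → NNRat)
    (r : List (ℝ × (L × PGuard X P × A × Finset X × L))) : Prop :=
  T.IsRunFrom v T.init (fun _ => 0) r

/-- A PPTA is L/U w.r.t. a partition of its parameters. -/
def PPTA.IsLU {A L X P : Type*} (T : PPTA A L X P) (isLower : P → Prop) : Prop :=
  ∀ t ∈ T.trans, ∀ c ∈ t.2.1, GuardAtom.LURespects isLower c

/-! ### Concrete runs of PIPTAs -/

/-- Concrete runs of a valuated PIPTA along a list of (edge, reset set, target location)
choices: from configuration `(l, w)` to configuration `(lf, wf)`. Each step delays by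
some `d ≥ 0`, satisfies the (valuated) guard and takes a branch of positive possible
probability. -/
def PIPTA.ConcSteps {A L X P : Type*} [DecidableEq X] (M : PIPTA A L X P) (v : P → NNRat) :
    L → (X → ℝ) → List (EdgeT A L X P × Finset X × L) → L → (X → ℝ) → Prop
  | l, w, [], lf, wf => lf = l ∧ wf = w
  | l, w, (e, ρ, l') :: rest, lf, wf =>
      e ∈ M.edges ∧ e.1 = l ∧ 0 < e.2.2.2.hi (ρ, l') ∧
      ∃ d : ℝ, 0 ≤ d ∧ VGuard.sat (fun x => w x + d) (e.2.1.map (GuardAtom.val v)) ∧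
        PIPTA.ConcSteps M v l' (fun x => if x ∈ ρ then 0 else w x + d) rest lf wf

/-- A location is reachable in the concrete semantics of a valuated PIPTA. -/
def PIPTA.ReachLoc {A L X P : Type*} [DecidableEq X] (M : PIPTA A L X P) (v : P → NNRat)
    (l : L) : Prop :=
  ∃ tr w, M.ConcSteps v M.init (fun _ => 0) tr l w

/-! ### Zone graphs (semantic zones) -/

/-- Time elapsing of a (semantic) zone. -/
def elapse {X : Type*} (C : Set (X → ℝ)) : Set (X → ℝ) :=
  { w' | ∃ w ∈ C, ∃ d : ℝ, 0 ≤ d ∧ w' = fun x => w x + d }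

/-- Reset of a (semantic) zone. -/
def resetClocks {X : Type*} [DecidableEq X] (C : Set (X → ℝ)) (ρ : Finset X) :
    Set (X → ℝ) :=
  { w' | ∃ w ∈ C, w' = fun x => if x ∈ ρ then 0 else w x }

/-- Successor zone: intersect with the guard, reset, then let time elapse. -/
def zoneSucc {X : Type*} [DecidableEq X] (C : Set (X → ℝ)) (g : Zone X) (ρ : Finset X) :
    Set (X → ℝ) :=
  elapse (resetClocks (C ∩ { w | Zone.sat w g }) ρ)

/-- The probabilistic zone graph of an IPTA, as an IMDP whose states are pairs of a
location and a (semantic) zone, and whose actions are the edges of the IPTA. -/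
def IPTA.zoneGraph {A L X : Type*} [DecidableEq X] (IP : IPTA A L X (Zone X)) :
    IMDP (L × Set (X → ℝ)) (L × Zone X × A × IntervalDist (Finset X × L)) where
  init := (IP.init, elapse { w | ∀ x, w x = 0 })
  trans := { t | ∃ l C g a Υ, (l, g, a, Υ) ∈ IP.edges ∧ t.1 = (l, C) ∧
      t.2.1 = (l, g, a, Υ) ∧
      (∀ (ρ : Finset X) (l' : L), 0 < Υ.hi (ρ, l') →
        t.2.2.lo (l', zoneSucc C g ρ) = Υ.lo (ρ, l') ∧
        t.2.2.hi (l', zoneSucc C g ρ) = Υ.hi (ρ, l')) ∧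
      (∀ s' : L × Set (X → ℝ),
        (∀ (ρ : Finset X) (l' : L), 0 < Υ.hi (ρ, l') → s' ≠ (l', zoneSucc C g ρ)) →
        t.2.2.lo s' = 0 ∧ t.2.2.hi s' = 0) }

/-! ### Parametric zone graphs -/

/-- A (semantic) parametric zone: a set of pairs of a clock valuation and a parameter
valuation. -/
abbrev PZone (X P : Type*) := Set ((X → ℝ) × (P → ℝ))

/-- Time elapsing of a parametric zone (only clocks are delayed). -/
def pElapse {X P : Type*} (C : PZone X P) : PZone X P :=
  { wu | ∃ w u, (w, u) ∈ C ∧ ∃ d : ℝ, 0 ≤ d ∧ wu = (fun x => w x + d, u) }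

/-- Reset of a parametric zone. -/
def pReset {X P : Type*} [DecidableEq X] (C : PZone X P) (ρ : Finset X) : PZone X P :=
  { wu | ∃ w u, (w, u) ∈ C ∧ wu = (fun x => if x ∈ ρ then 0 else w x, u) }

/-- Satisfaction of a parametric guard atom by a clock and a parameter valuation. -/
def GuardAtom.psat {X P : Type*} (w : X → ℝ) (u : P → ℝ) : GuardAtom X P → Prop
  | .const x r k => r.holds (w x) (k : ℝ)
  | .param x r p => r.holds (w x) (u p)

/-- Satisfaction of a parametric guard. -/
def PGuard.psat {X P : Type*} (w : X → ℝ) (u : P → ℝ) (g : PGuard X P) : Prop :=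
  ∀ c ∈ g, c.psat w u

/-- The parametric zone associated with a guard. -/
def pGuardSet {X P : Type*} (g : PGuard X P) : PZone X P :=
  { wu | PGuard.psat wu.1 wu.2 g }

/-- Successor parametric zone. -/
def pZoneSucc {X P : Type*} [DecidableEq X] (C : PZone X P) (g : PGuard X P)
    (ρ : Finset X) : PZone X P :=
  pElapse (pReset (C ∩ pGuardSet g) ρ)

/-- The initial parametric zone: all clocks are `0`, parameters are nonnegative, and
time may elapse. -/
def pInitZone (X P : Type*) : PZone X P :=
  pElapse { wu | (∀ x, wu.1 x = 0) ∧ ∀ p, 0 ≤ wu.2 p }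

/-- The parametric probabilistic zone graph of a PIPTA, as an IMDP. -/
def PIPTA.pZoneGraph {A L X P : Type*} [DecidableEq X] (M : PIPTA A L X P) :
    IMDP (L × PZone X P) (EdgeT A L X P) where
  init := (M.init, pInitZone X P)
  trans := { t | ∃ l C g a Υ, (l, g, a, Υ) ∈ M.edges ∧ t.1 = (l, C) ∧
      t.2.1 = (l, g, a, Υ) ∧
      (∀ (ρ : Finset X) (l' : L), 0 < Υ.hi (ρ, l') →
        t.2.2.lo (l', pZoneSucc C g ρ) = Υ.lo (ρ, l') ∧
        t.2.2.hi (l', pZoneSucc C g ρ) = Υ.hi (ρ, l')) ∧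
      (∀ s' : L × PZone X P,
        (∀ (ρ : Finset X) (l' : L), 0 < Υ.hi (ρ, l') → s' ≠ (l', pZoneSucc C g ρ)) →
        t.2.2.lo s' = 0 ∧ t.2.2.hi s' = 0) }

/-- Symbolic runs in the parametric probabilistic zone graph along a list of
(edge, reset set, target location) choices. -/
def PIPTA.SymbSteps {A L X P : Type*} [DecidableEq X] (M : PIPTA A L X P) :
    L → PZone X P → List (EdgeT A L X P × Finset X × L) → L → PZone X P → Prop
  | l, C, [], lf, Cf => lf = l ∧ Cf = C
  | l, C, (e, ρ, l') :: rest, lf, Cf =>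
      e ∈ M.edges ∧ e.1 = l ∧ 0 < e.2.2.2.hi (ρ, l') ∧
      PIPTA.SymbSteps M l' (pZoneSucc C e.2.1 ρ) rest lf Cf

/-- A parameter valuation satisfies the projection of a parametric zone onto the
parameters. -/
def vSatZone {X P : Type*} (v : P → NNRat) (C : PZone X P) : Prop :=
  ∃ w : X → ℝ, (w, fun p => ((v p : ℚ) : ℝ)) ∈ C


/-- The interval distribution over (reset set, zone-graph state) pairs reconstructed
from a zone-graph transition: `Υ'(ρ', s') = I(s')` when `s'` is the successor of the
current zone by resetting `ρ'` (and the corresponding branch has positive possible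
probability), and `[0,0]` otherwise. -/
def reconDist {L X : Type*} [DecidableEq X] (C : Set (X → ℝ)) (g : Zone X)
    (Υ : IntervalDist (Finset X × L)) (I : IntervalDist (L × Set (X → ℝ))) :
    IntervalDist (Finset X × (L × Set (X → ℝ))) where
  lo := fun t => if 0 < Υ.hi (t.1, t.2.1) ∧ t.2.2 = zoneSucc C g t.1 then I.lo t.2 else 0
  hi := fun t => if 0 < Υ.hi (t.1, t.2.1) ∧ t.2.2 = zoneSucc C g t.1 then I.hi t.2 else 0
  lo_nonneg := by
    intro t; (try dsimp only); split
    · exact I.lo_nonneg t.2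
    · exact le_rfl
  lo_le_hi := by
    intro t; (try dsimp only); split
    · exact I.lo_le_hi t.2
    · exact le_rfl
  hi_le_one := by
    intro t; (try dsimp only); split
    · exact I.hi_le_one t.2
    · exact zero_le_one

/-- `Reconstruct`: the IPTA reconstructed from the probabilistic zone graph of an IPTA.
Its locations are the states of the zone graph, its initial location is the initial
state, and each zone-graph transition yields an edge with the same guard and action. -/
def IPTA.Reconstruct {A L X : Type*} [DecidableEq X] (IP : IPTA A L X (Zone X)) :
    IPTA A (L × Set (X → ℝ)) X (Zone X) where
  init := IP.zoneGraph.init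
  edges := { e' | ∃ (s : L × Set (X → ℝ)) (g : Zone X) (a : A)
      (Υ : IntervalDist (Finset X × L)) (I : IntervalDist (L × Set (X → ℝ))),
      (s, (s.1, g, a, Υ), I) ∈ IP.zoneGraph.trans ∧
      e' = (s, g, a, reconDist s.2 g Υ I) }

/-- Equivalence of two IMDPs up to renaming (of states/locations and actions): a
bijection between the reachable parts preserving the initial state and the transitions
together with their interval probabilities. -/
def IMDP.EquivUpToRenaming {S1 A1 S2 A2 : Type*} (M1 : IMDP S1 A1) (M2 : IMDP S2 A2) :
    Prop :=
  ∃ (φ : S1 → S2) (ψ : A1 → A2),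
    Set.BijOn φ { s | M1.Reach s } { s | M2.Reach s } ∧
    φ M1.init = M2.init ∧
    (∀ s, M1.Reach s → ∀ a I, (s, a, I) ∈ M1.trans →
      ∃ I', (φ s, ψ a, I') ∈ M2.trans ∧
        ∀ s', M1.Reach s' → I'.lo (φ s') = I.lo s' ∧ I'.hi (φ s') = I.hi s') ∧
    (∀ s, M1.Reach s → ∀ a' I', (φ s, a', I') ∈ M2.trans →
      ∃ a I, ψ a = a' ∧ (s, a, I) ∈ M1.trans ∧
        ∀ s', M1.Reach s' → I'.lo (φ s') = I.lo s' ∧ I'.hi (φ s') = I.hi s')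

/-! A state `((l, C), C')` of the zone graph of `Reconstruct` is reachable exactly when
`C' = C` and `(l, C)` is reachable: the successor zones computed in the reconstructed IPTA
are the zones already stored in its target locations. So `Prod.fst` renames one graph into
the other. Edges are renamed by undoing `Reconstruct`: reading the interval distribution of
a reconstructed edge along the branches `(ρ, l') ↦ (ρ, (l', zoneSucc C g ρ))` gives back the
original one, and the transition distributions agree because both zone graphs determine them
uniquely from the edge. -/

namespace IntervalDist

variable {S T : Type*}

lemma ext {Υ₁ Υ₂ : IntervalDist S} (hlo : Υ₁.lo = Υ₂.lo) (hhi : Υ₁.hi = Υ₂.hi) :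
    Υ₁ = Υ₂ := by
  cases Υ₁; cases Υ₂; congr

def comap (Υ : IntervalDist T) (f : S → T) : IntervalDist S where
  lo := Υ.lo ∘ f
  hi := Υ.hi ∘ f
  lo_nonneg s := Υ.lo_nonneg (f s)
  lo_le_hi s := Υ.lo_le_hi (f s)
  hi_le_one s := Υ.hi_le_one (f s)

lemma eq_zero_of_not_hi_pos (Υ : IntervalDist S) {s : S} (h : ¬ 0 < Υ.hi s) :
    Υ.lo s = 0 ∧ Υ.hi s = 0 := by
  have := Υ.lo_nonneg s
  have := Υ.lo_le_hi s
  constructor <;> linarith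

end IntervalDist

section DiagLift

variable {L X : Type*}

def diagLift (I : IntervalDist (L × Set (X → ℝ))) :
    IntervalDist ((L × Set (X → ℝ)) × Set (X → ℝ)) :=
  (I.comap Prod.fst).restrict { t | t.2 = t.1.2 }

lemma diagLift_apply (I : IntervalDist (L × Set (X → ℝ))) {t : (L × Set (X → ℝ)) × Set (X → ℝ)}
    (ht : t.2 = t.1.2) : (diagLift I).lo t = I.lo t.1 ∧ (diagLift I).hi t = I.hi t.1 :=
  ⟨if_pos ht, if_pos ht⟩

lemma diagLift_hi_pos {I : IntervalDist (L × Set (X → ℝ))}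
    {t : (L × Set (X → ℝ)) × Set (X → ℝ)} (h : 0 < (diagLift I).hi t) :
    t.2 = t.1.2 ∧ 0 < I.hi t.1 := by
  by_cases ht : t.2 = t.1.2
  · exact ⟨ht, (diagLift_apply I ht).2 ▸ h⟩
  · exact absurd (if_neg ht : (diagLift I).hi t = 0) h.ne'

end DiagLift

section ZoneGraph

variable {A L X : Type*} [DecidableEq X]

def IsZoneSuccDist (C : Set (X → ℝ)) (g : Zone X) (Υ : IntervalDist (Finset X × L))
    (I : IntervalDist (L × Set (X → ℝ))) : Prop :=
  (∀ (ρ : Finset X) (l' : L), 0 < Υ.hi (ρ, l') →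
    I.lo (l', zoneSucc C g ρ) = Υ.lo (ρ, l') ∧ I.hi (l', zoneSucc C g ρ) = Υ.hi (ρ, l')) ∧
  (∀ s' : L × Set (X → ℝ),
    (∀ (ρ : Finset X) (l' : L), 0 < Υ.hi (ρ, l') → s' ≠ (l', zoneSucc C g ρ)) →
    I.lo s' = 0 ∧ I.hi s' = 0)

lemma IPTA.mem_zoneGraph_trans {IP : IPTA A L X (Zone X)} {s : L × Set (X → ℝ)}
    {e : L × Zone X × A × IntervalDist (Finset X × L)} {I : IntervalDist (L × Set (X → ℝ))} :
    (s, e, I) ∈ IP.zoneGraph.trans ↔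
      e.1 = s.1 ∧ e ∈ IP.edges ∧ IsZoneSuccDist s.2 e.2.1 e.2.2.2 I := by
  constructor
  · rintro ⟨l, C, g, a, Υ, he, rfl, rfl, hI⟩
    exact ⟨rfl, he, hI⟩
  · obtain ⟨l, g, a, Υ⟩ := e
    rintro ⟨rfl, he, hI⟩
    exact ⟨_, _, g, a, Υ, he, rfl, rfl, hI⟩

lemma IsZoneSuccDist.unique {C : Set (X → ℝ)} {g : Zone X} {Υ : IntervalDist (Finset X × L)}
    {I₁ I₂ : IntervalDist (L × Set (X → ℝ))}
    (h₁ : IsZoneSuccDist C g Υ I₁) (h₂ : IsZoneSuccDist C g Υ I₂) : I₁ = I₂ := by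
  suffices ∀ s', I₁.lo s' = I₂.lo s' ∧ I₁.hi s' = I₂.hi s' from
    IntervalDist.ext (funext fun s' => (this s').1) (funext fun s' => (this s').2)
  intro s'
  by_cases hbranch : ∃ ρ l', 0 < Υ.hi (ρ, l') ∧ s' = (l', zoneSucc C g ρ)
  · obtain ⟨ρ, l', hpos, rfl⟩ := hbranch
    rw [(h₁.1 ρ l' hpos).1, (h₁.1 ρ l' hpos).2, (h₂.1 ρ l' hpos).1, (h₂.1 ρ l' hpos).2]
    exact ⟨rfl, rfl⟩
  · push Not at hbranch
    rw [(h₁.2 s' hbranch).1, (h₁.2 s' hbranch).2, (h₂.2 s' hbranch).1, (h₂.2 s' hbranch).2]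
    exact ⟨rfl, rfl⟩

lemma reconDist_hi_pos {C : Set (X → ℝ)} {g : Zone X} {Υ : IntervalDist (Finset X × L)}
    {I : IntervalDist (L × Set (X → ℝ))} {ρ : Finset X} {m : L × Set (X → ℝ)}
    (h : 0 < (reconDist C g Υ I).hi (ρ, m)) :
    0 < Υ.hi (ρ, m.1) ∧ m.2 = zoneSucc C g ρ := by
  by_contra hc
  exact h.ne' (if_neg hc)

lemma reconDist_apply {C : Set (X → ℝ)} {g : Zone X} {Υ : IntervalDist (Finset X × L)}
    {I : IntervalDist (L × Set (X → ℝ))} {ρ : Finset X} {m : L × Set (X → ℝ)}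
    (h : 0 < Υ.hi (ρ, m.1) ∧ m.2 = zoneSucc C g ρ) :
    (reconDist C g Υ I).lo (ρ, m) = I.lo m ∧ (reconDist C g Υ I).hi (ρ, m) = I.hi m :=
  ⟨if_pos h, if_pos h⟩

def succBranch (C : Set (X → ℝ)) (g : Zone X) (p : Finset X × L) :
    Finset X × (L × Set (X → ℝ)) :=
  (p.1, (p.2, zoneSucc C g p.1))

lemma IsZoneSuccDist.comap_reconDist {C : Set (X → ℝ)} {g : Zone X}
    {Υ : IntervalDist (Finset X × L)} {I : IntervalDist (L × Set (X → ℝ))}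
    (hI : IsZoneSuccDist C g Υ I) : (reconDist C g Υ I).comap (succBranch C g) = Υ := by
  suffices ∀ ρ l', (reconDist C g Υ I).lo (ρ, (l', zoneSucc C g ρ)) = Υ.lo (ρ, l') ∧
      (reconDist C g Υ I).hi (ρ, (l', zoneSucc C g ρ)) = Υ.hi (ρ, l') from
    IntervalDist.ext (funext fun p => (this p.1 p.2).1) (funext fun p => (this p.1 p.2).2)
  intro ρ l'
  by_cases hpos : 0 < Υ.hi (ρ, l')
  · rw [(reconDist_apply ⟨hpos, rfl⟩).1, (reconDist_apply ⟨hpos, rfl⟩).2]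
    exact hI.1 ρ l' hpos
  · have hne : ¬ (0 < Υ.hi (ρ, l') ∧ zoneSucc C g ρ = zoneSucc C g ρ) := fun h => hpos h.1
    rw [(Υ.eq_zero_of_not_hi_pos hpos).1, (Υ.eq_zero_of_not_hi_pos hpos).2]
    exact ⟨if_neg hne, if_neg hne⟩

lemma IsZoneSuccDist.reconDist_diagLift {C : Set (X → ℝ)} {g : Zone X}
    {Υ : IntervalDist (Finset X × L)} {I : IntervalDist (L × Set (X → ℝ))}
    (hI : IsZoneSuccDist C g Υ I) :
    IsZoneSuccDist C g (reconDist C g Υ I) (diagLift I) := by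
  constructor
  · intro ρ m hpos
    have hbranch := reconDist_hi_pos hpos
    rw [(reconDist_apply hbranch).1, (reconDist_apply hbranch).2]
    exact diagLift_apply I hbranch.2.symm
  · rintro ⟨m, C'⟩ hnot
    by_cases hdiag : C' = m.2
    · rw [(diagLift_apply I hdiag).1, (diagLift_apply I hdiag).2]
      subst hdiag
      refine hI.2 m fun ρ l' hpos hm => hnot ρ m ?_ (by rw [hm])
      have hbranch : 0 < Υ.hi (ρ, m.1) ∧ m.2 = zoneSucc C g ρ := by rw [hm]; exact ⟨hpos, rfl⟩
      rw [(reconDist_apply hbranch).2, hm, (hI.1 ρ l' hpos).2]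
      exact hpos
    · exact ⟨if_neg hdiag, if_neg hdiag⟩

lemma IPTA.mem_reconstruct_zoneGraph_trans {IP : IPTA A L X (Zone X)}
    {s : L × Set (X → ℝ)}
    {e' : (L × Set (X → ℝ)) × Zone X × A × IntervalDist (Finset X × (L × Set (X → ℝ)))}
    {I' : IntervalDist ((L × Set (X → ℝ)) × Set (X → ℝ))} :
    ((s, s.2), e', I') ∈ IP.Reconstruct.zoneGraph.trans ↔
      ∃ g a Υ I, (s, (s.1, g, a, Υ), I) ∈ IP.zoneGraph.trans ∧
        e' = (s, g, a, reconDist s.2 g Υ I) ∧ I' = diagLift I := by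
  rw [IPTA.mem_zoneGraph_trans]
  constructor
  · rintro ⟨hsrc, ⟨s₀, g, a, Υ, I, ht, rfl⟩, hI'⟩
    obtain rfl : s₀ = s := hsrc
    have hI := (IPTA.mem_zoneGraph_trans.1 ht).2.2
    exact ⟨g, a, Υ, I, ht, rfl, hI'.unique hI.reconDist_diagLift⟩
  · rintro ⟨g, a, Υ, I, ht, rfl, rfl⟩
    exact ⟨rfl, ⟨s, g, a, Υ, I, ht, rfl⟩, (IPTA.mem_zoneGraph_trans.1 ht).2.2.reconDist_diagLift⟩

lemma IPTA.reach_reconstruct_zoneGraph_iff {IP : IPTA A L X (Zone X)}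
    {t : (L × Set (X → ℝ)) × Set (X → ℝ)} :
    IP.Reconstruct.zoneGraph.Reach t ↔ t.2 = t.1.2 ∧ IP.zoneGraph.Reach t.1 := by
  constructor
  · intro h
    induction h with
    | init => exact ⟨rfl, .init⟩
    | @step t e I' t' _ ht hpos ih =>
      obtain ⟨s, C⟩ := t
      obtain ⟨hdiag, hreach⟩ := ih
      obtain rfl : C = s.2 := hdiag
      obtain ⟨g, a, Υ, I, hs, -, rfl⟩ := IPTA.mem_reconstruct_zoneGraph_trans.1 ht
      obtain ⟨hdiag', hpos'⟩ := diagLift_hi_pos hpos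
      exact ⟨hdiag', .step hreach hs hpos'⟩
  · obtain ⟨s, C⟩ := t
    rintro ⟨hdiag, hreach : IP.zoneGraph.Reach s⟩
    obtain rfl : C = s.2 := hdiag
    induction hreach with
    | init => exact .init
    | @step s e I s' _ ht hpos ih =>
      obtain ⟨l, g, a, Υ⟩ := e
      obtain ⟨rfl, -⟩ := IPTA.mem_zoneGraph_trans.1 ht
      refine .step ih (IPTA.mem_reconstruct_zoneGraph_trans.2 ⟨g, a, Υ, I, ht, rfl, rfl⟩) ?_
      rwa [(diagLift_apply I (t := (s', s'.2)) rfl).2]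

def originalEdge
    (e' : (L × Set (X → ℝ)) × Zone X × A × IntervalDist (Finset X × (L × Set (X → ℝ)))) :
    L × Zone X × A × IntervalDist (Finset X × L) :=
  (e'.1.1, e'.2.1, e'.2.2.1, e'.2.2.2.comap (succBranch e'.1.2 e'.2.1))

lemma IsZoneSuccDist.originalEdge {s : L × Set (X → ℝ)} {g : Zone X} (a : A)
    {Υ : IntervalDist (Finset X × L)} {I : IntervalDist (L × Set (X → ℝ))}
    (hI : IsZoneSuccDist s.2 g Υ I) :
    originalEdge (s, g, a, reconDist s.2 g Υ I) = (s.1, g, a, Υ) := by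
  simp only [_root_.originalEdge, hI.comap_reconDist]

end ZoneGraph

/-- The probabilistic zone graph of the IPTA reconstructed from the
probabilistic zone graph of an IPTA is equivalent, up to renaming of locations, to the
original probabilistic zone graph. -/
theorem reconstruct_zoneGraph_equiv {A L X : Type*} [DecidableEq X]
    (IP : IPTA A L X (Zone X)) :
    IMDP.EquivUpToRenaming ((IP.Reconstruct).zoneGraph) (IP.zoneGraph) := by
  have hreach := @IPTA.reach_reconstruct_zoneGraph_iff A L X _ IP
  have hagree : ∀ I : IntervalDist (L × Set (X → ℝ)), ∀ t, IP.Reconstruct.zoneGraph.Reach t →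
      I.lo t.1 = (diagLift I).lo t ∧ I.hi t.1 = (diagLift I).hi t := fun I t ht =>
    ((diagLift_apply I (hreach.1 ht).1).imp Eq.symm Eq.symm)
  refine ⟨Prod.fst, originalEdge, ⟨fun t ht => (hreach.1 ht).2, ?_, ?_⟩, rfl, ?_, ?_⟩
  · intro t₁ ht₁ t₂ ht₂ (h : t₁.1 = t₂.1)
    exact Prod.ext h (by rw [(hreach.1 ht₁).1, (hreach.1 ht₂).1, h])
  · exact fun s hs => ⟨(s, s.2), hreach.2 ⟨rfl, hs⟩, rfl⟩
  · rintro ⟨s, C⟩ ht e' I' htrans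
    obtain rfl : C = s.2 := (hreach.1 ht).1
    obtain ⟨g, a, Υ, I, hs, rfl, rfl⟩ := IPTA.mem_reconstruct_zoneGraph_trans.1 htrans
    refine ⟨I, ?_, hagree I⟩
    rwa [(IPTA.mem_zoneGraph_trans.1 hs).2.2.originalEdge]
  · rintro ⟨s, C⟩ ht ⟨l, g, a, Υ⟩ I htrans
    obtain rfl : C = s.2 := (hreach.1 ht).1
    obtain ⟨rfl, -, hI⟩ := IPTA.mem_zoneGraph_trans.1 htrans
    exact ⟨_, diagLift I, hI.originalEdge a,
      IPTA.mem_reconstruct_zoneGraph_trans.2 ⟨g, a, Υ, I, htrans, rfl, rfl⟩, hagree I⟩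

end
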